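/- Let (W,S) be a Coxeter system, 𝓘 an ideal of W in the left weak order with 𝓘 ⊆ D_J for some J ⊆ S, K ⊆ S, and d ∈ D_K⁻¹ ∩ 𝓘. Then K ∩ dJd⁻¹ ⊆ Pos(𝓘_d), i.e. for every v ∈ W_K with vd ∈ 𝓘 and every s ∈ K with sd = dr for some r ∈ J, one has l(vs) > l(v). -/

import Mathlib

/-!
Because `d` has no left descent in `K`, length is additive on `W_K d`: `ℓ(u d) = ℓ u + ℓ d` for
`u ∈ W_K`. Hence `v s d = v d r` gives `ℓ(v s) + ℓ d = ℓ(v d r) > ℓ(v d) = ℓ v + ℓ d`, the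
inequality because `v d ∈ 𝓘 ⊆ D_J`.

Additivity is first proved for a shortest element `d₀` of `W_K d`: a reduced subword of
(a word for `u`) ++ (a reduced word for `d₀`) cannot drop a letter of the second factor, by
minimality. A nontrivial `x ∈ W_K` with `d = x d₀` would then give `d` a left descent in `K`,
so `d = d₀`. Reduced subwords come from the exchange property, which comes from the sign
representation: `W` acts on `W × ZMod 2` so that `π ω` sends `(t, e)` to
`(π ω t (π ω)⁻¹, e + n)`, with `n` the number of occurrences of `t` in the right inversion
sequence of `ω`. So the parity of `n` depends only on `π ω`, and a right descent `s` of `π ω`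
occurs in that sequence.
-/

section
variable {B W : Type*} [Group W] {M : CoxeterMatrix B} (cs : CoxeterSystem M W)

/-- The left weak order: `v ≤_L w` iff `l(w) = l(wv⁻¹) + l(v)`. -/
def leftWeakLE (v w : W) : Prop :=
  cs.length w = cs.length (w * v⁻¹) + cs.length v

end

section SignedConj

open Finset
open scoped Classical

variable {G : Type*} [Group G]

theorem conj_eq_iff_eq_conj_inv (g w c : G) : g * w * g⁻¹ = c ↔ w = g⁻¹ * c * g := by
  constructor <;> rintro rfl <;> group

noncomputable def signedConj (a : G) (ha : a * a = 1) : Equiv.Perm (G × ZMod 2) :=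
  Function.Involutive.toPerm (fun x => (a * x.1 * a⁻¹, x.2 + if x.1 = a then 1 else 0)) <| by
    rintro ⟨w, e⟩
    have ha' : a⁻¹ * a⁻¹ = 1 := by rw [← mul_inv_rev, ha, inv_one]
    have hfix : a * w * a⁻¹ = a ↔ w = a := by simp [conj_eq_iff_eq_conj_inv]
    ext
    · calc a * (a * w * a⁻¹) * a⁻¹ = (a * a) * w * (a⁻¹ * a⁻¹) := by group
        _ = w := by rw [ha, ha', one_mul, mul_one]
    · by_cases h : w = a <;> simp [hfix, h, add_assoc, CharTwo.add_self_eq_zero]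

theorem signedConj_apply (a : G) (ha : a * a = 1) (w : G) (e : ZMod 2) :
    signedConj a ha (w, e) = (a * w * a⁻¹, e + if w = a then 1 else 0) := rfl

theorem signedConj_mul_pow_apply (a b : G) (ha : a * a = 1) (hb : b * b = 1) (k : ℕ) (w : G)
    (e : ZMod 2) :
    ((signedConj a ha * signedConj b hb) ^ k) (w, e) =
      ((a * b) ^ k * w * ((a * b) ^ k)⁻¹,
        e + ∑ l ∈ range (2 * k), if w = b * (a * b) ^ l then 1 else 0) := by
  have hb' : b⁻¹ = b := inv_eq_of_mul_eq_one_left hb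
  have hab : (a * b)⁻¹ = b * a := by
    rw [mul_inv_rev, hb', inv_eq_of_mul_eq_one_left ha]
  have hreflect : ∀ n : ℕ, b * (a * b) ^ n = ((a * b) ^ n)⁻¹ * b := fun n => by
    rw [← inv_pow, hab]
    exact SemiconjBy.pow_right (mul_assoc b a b).symm n
  induction k with
  | zero => simp
  | succ k ih =>
    have h₁ : (a * b) ^ k * w * ((a * b) ^ k)⁻¹ = b ↔ w = b * (a * b) ^ (2 * k) := by
      rw [conj_eq_iff_eq_conj_inv, two_mul, pow_add, ← mul_assoc, hreflect]
    have h₂ : b * ((a * b) ^ k * w * ((a * b) ^ k)⁻¹) * b⁻¹ = a ↔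
        w = b * (a * b) ^ (2 * k + 1) := by
      have : ((a * b) ^ k)⁻¹ * (b * a * b) * (a * b) ^ k = b * (a * b) ^ (2 * k + 1) := by
        calc ((a * b) ^ k)⁻¹ * (b * a * b) * (a * b) ^ k
            = ((a * b) ^ k)⁻¹ * b * (a * b) ^ (k + 1) := by
              rw [pow_succ']; simp only [mul_assoc]
          _ = b * (a * b) ^ (2 * k + 1) := by rw [← hreflect, mul_assoc, ← pow_add]; ring_nf
      rw [conj_eq_iff_eq_conj_inv, hb', conj_eq_iff_eq_conj_inv, this]
    rw [pow_succ', Equiv.Perm.mul_apply, ih, Equiv.Perm.mul_apply, signedConj_apply,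
      signedConj_apply, mul_add, mul_one, sum_range_succ, sum_range_succ, h₁, h₂]
    ext
    · simp only [pow_succ', mul_inv_rev, mul_assoc]
    · simp only [add_assoc]

theorem signedConj_mul_pow_eq_one (a b : G) (ha : a * a = 1) (hb : b * b = 1) {m : ℕ}
    (hm : (a * b) ^ m = 1) : (signedConj a ha * signedConj b hb) ^ m = 1 := by
  ext1 ⟨w, e⟩
  -- the summand is `m`-periodic, so the sum over `range (2 * m)` counts every term twice
  rw [signedConj_mul_pow_apply, hm, two_mul, sum_range_add]
  simp only [pow_add, hm, one_mul, CharTwo.add_self_eq_zero]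
  simp

end SignedConj

namespace CoxeterSystem

open scoped Classical

variable {B W : Type*} [Group W] {M : CoxeterMatrix B} (cs : CoxeterSystem M W)

local prefix:100 "s " => cs.simple
local prefix:100 "π " => cs.wordProd
local prefix:100 "ℓ " => cs.length
local prefix:100 "ris " => cs.rightInvSeq

noncomputable def signRep : W →* Equiv.Perm (W × ZMod 2) :=
  cs.lift ⟨fun i => signedConj (s i) (cs.simple_mul_simple_self i),
    fun i i' => signedConj_mul_pow_eq_one _ _ _ _ (cs.simple_mul_simple_pow i i')⟩

theorem signRep_wordProd (ω : List B) (w : W) (e : ZMod 2) :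
    cs.signRep (π ω) (w, e) = (π ω * w * (π ω)⁻¹, e + (ris ω).count w) := by
  induction ω generalizing w e with
  | nil => simp
  | cons i ω ih =>
    have hsimple : cs.signRep (s i) = signedConj (s i) (cs.simple_mul_simple_self i) :=
      cs.lift_apply_simple _ i
    have hcond : π ω * w * (π ω)⁻¹ = s i ↔ (π ω)⁻¹ * s i * π ω = w := by
      rw [conj_eq_iff_eq_conj_inv, eq_comm]
    rw [cs.wordProd_cons, map_mul, Equiv.Perm.mul_apply, ih, hsimple, signedConj_apply, hcond]
    simp only [rightInvSeq, List.count_cons, beq_iff_eq, mul_inv_rev, mul_assoc]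
    push_cast
    ring_nf

theorem natCast_count_rightInvSeq_eq {ω ω' : List B} (h : π ω = π ω') (t : W) :
    ((ris ω).count t : ZMod 2) = (ris ω').count t := by
  have h₁ := cs.signRep_wordProd ω t 0
  rw [h, signRep_wordProd] at h₁
  simpa using (congrArg Prod.snd h₁).symm

theorem simple_mem_rightInvSeq {ω : List B} {i : B}
    (hi : cs.IsRightDescent (π ω) i) : s i ∈ ris ω := by
  obtain ⟨ψ, hψ, hψω⟩ := cs.exists_isReduced (π ω * s i)
  have hprod : π (ψ.concat i) = π ω := by
    rw [cs.wordProd_concat, ← hψω, cs.simple_mul_simple_cancel_right]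
  have hnot : s i ∉ ris ψ := fun hmem => by
    have := (cs.isRightInversion_of_mem_rightInvSeq hψ hmem).2
    rw [← hψω, cs.simple_mul_simple_cancel_right] at this
    exact lt_asymm hi this
  have hcount : (ris (ψ.concat i)).count (s i) = 1 := by
    have hzero : ((ris ψ).map (MulAut.conj (s i))).count (s i) = 0 := by
      rw [List.count_eq_zero, List.mem_map]
      rintro ⟨t, ht, hts⟩
      rw [MulAut.conj_apply, conj_eq_iff_eq_conj_inv, inv_mul_cancel, one_mul] at hts
      exact hnot (hts ▸ ht)
    rw [cs.rightInvSeq_concat, List.concat_eq_append, List.count_append, hzero]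
    simp
  by_contra hmem
  have := cs.natCast_count_rightInvSeq_eq hprod (s i)
  rw [hcount, List.count_eq_zero_of_not_mem hmem] at this
  exact absurd this (by decide)

theorem exists_wordProd_mul_simple_eq_eraseIdx {ω : List B} {i : B}
    (hi : cs.IsRightDescent (π ω) i) : ∃ k < ω.length, π ω * s i = π (ω.eraseIdx k) := by
  obtain ⟨k, hk, hki⟩ := List.getElem_of_mem (cs.simple_mem_rightInvSeq hi)
  refine ⟨k, by simpa using hk, ?_⟩
  rw [← cs.wordProd_mul_getD_rightInvSeq, List.getD_eq_getElem _ _ hk, hki]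

theorem exists_isReduced_sublist (ω : List B) :
    ∃ ψ, ψ.Sublist ω ∧ cs.IsReduced ψ ∧ π ψ = π ω := by
  induction ω using List.reverseRecOn with
  | nil => exact ⟨[], .slnil, by simp [IsReduced], rfl⟩
  | append_singleton ω i ih =>
    obtain ⟨ψ, hψω, hψ, hπ⟩ := ih
    rw [cs.wordProd_append, cs.wordProd_singleton, ← hπ]
    rcases cs.length_mul_simple (π ψ) i with hasc | hdesc
    · refine ⟨ψ ++ [i], hψω.append (List.Sublist.refl _), ?_, ?_⟩ <;>
        simp [IsReduced, cs.wordProd_append, hasc, hψ.eq]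
    · obtain ⟨k, hk, hki⟩ := cs.exists_wordProd_mul_simple_eq_eraseIdx (ω := ψ) (i := i)
        (by rw [IsRightDescent]; omega)
      have hsub := (ψ.eraseIdx_sublist k).trans (hψω.trans (List.sublist_append_left ω [i]))
      refine ⟨ψ.eraseIdx k, hsub, ?_, hki.symm⟩
      rw [IsReduced, ← hki, List.length_eraseIdx_of_lt hk, ← hψ.eq]
      omega

variable {K : Set B}

theorem wordProd_mem_closure {ω : List B} (hω : ∀ i ∈ ω, i ∈ K) :
    π ω ∈ Subgroup.closure (cs.simple '' K) :=
  Subgroup.list_prod_mem _ fun _ hx => by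
    obtain ⟨i, hi, rfl⟩ := List.mem_map.mp hx
    exact Subgroup.subset_closure ⟨i, hω i hi, rfl⟩

theorem exists_wordProd_eq_of_mem_closure {u : W} (hu : u ∈ Subgroup.closure (cs.simple '' K)) :
    ∃ ω : List B, (∀ i ∈ ω, i ∈ K) ∧ π ω = u := by
  induction hu using Subgroup.closure_induction with
  | mem _ hx =>
    obtain ⟨i, hi, rfl⟩ := hx
    exact ⟨[i], by simpa using hi, cs.wordProd_singleton i⟩
  | one => exact ⟨[], by simp, cs.wordProd_nil⟩
  | mul _ _ _ _ ihx ihy =>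
    obtain ⟨ω, hω, rfl⟩ := ihx
    obtain ⟨ω', hω', rfl⟩ := ihy
    refine ⟨ω ++ ω', fun i hi => ?_, cs.wordProd_append ω ω'⟩
    exact (List.mem_append.mp hi).elim (hω i) (hω' i)
  | inv _ _ ih =>
    obtain ⟨ω, hω, rfl⟩ := ih
    exact ⟨ω.reverse, by simpa using hω, cs.wordProd_reverse ω⟩

theorem exists_isLeftDescent_of_mem_closure {u : W} (hu : u ∈ Subgroup.closure (cs.simple '' K))
    (hu₁ : u ≠ 1) : ∃ i ∈ K, cs.IsLeftDescent u i := by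
  obtain ⟨ω, hωK, rfl⟩ := cs.exists_wordProd_eq_of_mem_closure hu
  obtain ⟨ψ, hψω, hψ, hπ⟩ := cs.exists_isReduced_sublist ω
  rw [← hπ] at hu₁ ⊢
  cases ψ with
  | nil => exact absurd cs.wordProd_nil hu₁
  | cons i ψ =>
    refine ⟨i, hωK i (hψω.subset List.mem_cons_self), ?_⟩
    have := cs.length_wordProd_le ψ
    rw [IsLeftDescent, hψ.eq, cs.wordProd_cons, cs.simple_mul_simple_cancel_left, List.length_cons]
    omega

theorem length_mul_eq_add_of_forall_length_le {d : W}
    (hmin : ∀ x ∈ Subgroup.closure (cs.simple '' K), ℓ d ≤ ℓ (x * d)) {u : W}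
    (hu : u ∈ Subgroup.closure (cs.simple '' K)) : ℓ (u * d) = ℓ u + ℓ d := by
  obtain ⟨ω, hωK, rfl⟩ := cs.exists_wordProd_eq_of_mem_closure hu
  obtain ⟨δ, hδ, rfl⟩ := cs.exists_isReduced d
  obtain ⟨ψ, hψ, hψred, hπψ⟩ := cs.exists_isReduced_sublist (ω ++ δ)
  obtain ⟨ω', δ', rfl, hω', hδ'⟩ := List.sublist_append_iff.mp hψ
  rw [cs.wordProd_append, cs.wordProd_append] at hπψ
  -- by minimality of `π δ` in its coset, `δ'` cannot be a proper subword of `δ`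
  have hδδ' : δ.length ≤ δ'.length := calc
    δ.length = ℓ (π δ) := hδ.symm
    _ ≤ ℓ (((π ω')⁻¹ * π ω) * π δ) := hmin _ <| Subgroup.mul_mem _
        (Subgroup.inv_mem _ (cs.wordProd_mem_closure fun i hi => hωK i (hω'.subset hi)))
        (cs.wordProd_mem_closure hωK)
    _ = ℓ (π δ') := by rw [mul_assoc, ← hπψ, inv_mul_cancel_left]
    _ ≤ δ'.length := cs.length_wordProd_le δ'
  obtain rfl : δ = δ' := (hδ'.eq_of_length (le_antisymm hδ'.length_le hδδ')).symm
  have hω'ω : π ω' = π ω := mul_right_cancel hπψ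
  have hlen : ℓ (π ω * π δ) = ω'.length + δ.length := by
    rw [← hπψ, ← cs.wordProd_append, hψred.eq, List.length_append]
  have hω' : ℓ (π ω) ≤ ω'.length := hω'ω ▸ cs.length_wordProd_le ω'
  have := cs.length_mul_le (π ω) (π δ)
  have := hδ.eq
  omega

theorem length_le_length_mul_of_not_isLeftDescent {d : W}
    (hd : ∀ i ∈ K, ¬cs.IsLeftDescent d i) {x : W}
    (hx : x ∈ Subgroup.closure (cs.simple '' K)) : ℓ d ≤ ℓ (x * d) := by
  obtain ⟨_, ⟨y, hy, rfl⟩, hmin⟩ := (measure cs.length).wf.has_min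
    ((· * d) '' (Subgroup.closure (cs.simple '' K) : Set W))
    ⟨d, 1, Subgroup.one_mem _, one_mul d⟩
  have hyd : ∀ z ∈ Subgroup.closure (cs.simple '' K), ℓ (y * d) ≤ ℓ (z * (y * d)) :=
    fun z hz => not_lt.mp <| hmin _ ⟨z * y, Subgroup.mul_mem _ hz hy, mul_assoc z y d⟩
  -- a left descent `i ∈ K` of `y⁻¹` would be a left descent of `d = y⁻¹ * (y * d)`
  obtain rfl : y = 1 := by
    by_contra hy₁
    obtain ⟨i, hi, hdesc⟩ := cs.exists_isLeftDescent_of_mem_closure (Subgroup.inv_mem _ hy)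
      (inv_ne_one.mpr hy₁)
    have h₁ := cs.length_mul_eq_add_of_forall_length_le hyd (Subgroup.inv_mem _ hy)
    have h₂ := cs.length_mul_eq_add_of_forall_length_le hyd <|
      Subgroup.mul_mem _ (Subgroup.subset_closure ⟨i, hi, rfl⟩) (Subgroup.inv_mem _ hy)
    rw [inv_mul_cancel_left] at h₁
    rw [mul_assoc, inv_mul_cancel_left] at h₂
    exact hd i hi (by rw [IsLeftDescent] at hdesc ⊢; omega)
  simpa using hyd x hx

theorem length_mul_eq_add_of_not_isLeftDescent {d : W} (hd : ∀ i ∈ K, ¬cs.IsLeftDescent d i)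
    {u : W} (hu : u ∈ Subgroup.closure (cs.simple '' K)) : ℓ (u * d) = ℓ u + ℓ d :=
  cs.length_mul_eq_add_of_forall_length_le
    (fun _ hx => cs.length_le_length_mul_of_not_isLeftDescent hd hx) hu

end CoxeterSystem

section
variable {B W : Type*} [Group W] {M : CoxeterMatrix B} (cs : CoxeterSystem M W)

theorem conjInter_subset_pos (𝓘 : Set W) (J K : Set B)
    (hIDJ : ∀ w ∈ 𝓘, ∀ j ∈ J, cs.length (w * cs.simple j) > cs.length w)
    (d : W)
    (hd : ∀ i ∈ K, cs.length (cs.simple i * d) > cs.length d) :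
    ∀ v ∈ (Subgroup.closure (cs.simple '' K) : Subgroup W), v * d ∈ 𝓘 →
      ∀ i ∈ K, (∃ j ∈ J, cs.simple i * d = d * cs.simple j) →
        cs.length (v * cs.simple i) > cs.length v := by
  rintro v hv hvd i hi ⟨j, hj, hij⟩
  have hd' : ∀ k ∈ K, ¬cs.IsLeftDescent d k := fun k hk => (hd k hk).not_gt
  have hvi : v * cs.simple i ∈ Subgroup.closure (cs.simple '' K) :=
    Subgroup.mul_mem _ hv (Subgroup.subset_closure ⟨i, hi, rfl⟩)
  have := calc
    cs.length (v * cs.simple i) + cs.length d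
        = cs.length (v * d * cs.simple j) := by
          rw [← cs.length_mul_eq_add_of_not_isLeftDescent hd' hvi, mul_assoc, hij, mul_assoc]
    _ > cs.length (v * d) := hIDJ _ hvd j hj
    _ = cs.length v + cs.length d := cs.length_mul_eq_add_of_not_isLeftDescent hd' hv
  omega

end
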